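/- arXiv:1212.5313 — 2 statements merged into one kernel-verified Lean document; each statement's English description precedes it below -/
import Mathlib

section
/- For every natural number l there exist natural numbers k_1, k_2, k_3, k_4 with k_1 odd and k_2, k_3, k_4 even, such that 4l + 1 = k_1² + k_2² + k_3² + k_4². -/
lemma sq_mod_four (a : ℕ) : a ^ 2 % 4 = a % 2 := by
  rcases Nat.even_or_odd a with ⟨k, hk⟩ | ⟨k, hk⟩ <;> subst hk
  · have h : (k + k) ^ 2 = 4 * k ^ 2 := by ring
    rw [h, Nat.mul_mod_right]
    omega
  · have h : (2 * k + 1) ^ 2 = 4 * (k ^ 2 + k) + 1 := by ring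
    rw [h, Nat.mul_add_mod]
    omega

theorem stmt8 (l : ℕ) :
    ∃ k₁ k₂ k₃ k₄ : ℕ, Odd k₁ ∧ Even k₂ ∧ Even k₃ ∧ Even k₄ ∧
      4 * l + 1 = k₁ ^ 2 + k₂ ^ 2 + k₃ ^ 2 + k₄ ^ 2 := by
  obtain ⟨a, b, c, d, h⟩ := Nat.sum_four_squares (4 * l + 1)
  have ha := sq_mod_four a
  have hb := sq_mod_four b
  have hc := sq_mod_four c
  have hd := sq_mod_four d
  generalize hA : a ^ 2 = A at h ha
  generalize hB : b ^ 2 = B at h hb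
  generalize hC : c ^ 2 = C at h hc
  generalize hD : d ^ 2 = D at h hd
  rcases Nat.even_or_odd a with pa | pa <;>
  rcases Nat.even_or_odd b with pb | pb <;>
  rcases Nat.even_or_odd c with pc | pc <;>
  rcases Nat.even_or_odd d with pd | pd <;>
  first
    | exact ⟨a, b, c, d, pa, pb, pc, pd, by rw [hA, hB, hC, hD]; omega⟩
    | exact ⟨b, a, c, d, pb, pa, pc, pd, by rw [hA, hB, hC, hD]; omega⟩
    | exact ⟨c, a, b, d, pc, pa, pb, pd, by rw [hA, hB, hC, hD]; omega⟩
    | exact ⟨d, a, b, c, pd, pa, pb, pc, by rw [hA, hB, hC, hD]; omega⟩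
    | (exfalso
       simp only [Nat.even_iff, Nat.odd_iff] at pa pb pc pd
       omega)
end

section
/- A natural number n is even if and only if there exist natural numbers a, b, c, d with a odd and b, c, d even such that a² + b² + c² + d² = 2n + 1. -/
lemma sq_mod4 (x : ℕ) : x ^ 2 % 4 = 0 ∧ x % 2 = 0 ∨ x ^ 2 % 4 = 1 ∧ x % 2 = 1 := by
  rcases Nat.even_or_odd x with ⟨k, hk⟩ | ⟨k, hk⟩
  · left; constructor
    · subst hk; have : (k + k) ^ 2 = 4 * k ^ 2 := by ring
      omega
    · omega
  · right; constructor
    · subst hk; have : (2 * k + 1) ^ 2 = 4 * (k ^ 2 + k) + 1 := by ring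
      omega
    · omega

theorem stmt9 (n : ℕ) :
    Even n ↔
    ∃ a b c d : ℕ, Odd a ∧ Even b ∧ Even c ∧ Even d ∧
      a ^ 2 + b ^ 2 + c ^ 2 + d ^ 2 = 2 * n + 1 := by
  constructor
  · rintro ⟨m, hm⟩
    obtain ⟨a, b, c, d, h⟩ := Nat.sum_four_squares (2 * n + 1)
    rcases sq_mod4 a with ⟨ha4, ha2⟩ | ⟨ha4, ha2⟩ <;>
    rcases sq_mod4 b with ⟨hb4, hb2⟩ | ⟨hb4, hb2⟩ <;>
    rcases sq_mod4 c with ⟨hc4, hc2⟩ | ⟨hc4, hc2⟩ <;>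
    rcases sq_mod4 d with ⟨hd4, hd2⟩ | ⟨hd4, hd2⟩ <;>
    (first
      | omega
      | exact ⟨a, b, c, d, Nat.odd_iff.2 (by omega), Nat.even_iff.2 (by omega),
          Nat.even_iff.2 (by omega), Nat.even_iff.2 (by omega), by omega⟩
      | exact ⟨b, a, c, d, Nat.odd_iff.2 (by omega), Nat.even_iff.2 (by omega),
          Nat.even_iff.2 (by omega), Nat.even_iff.2 (by omega), by omega⟩
      | exact ⟨c, a, b, d, Nat.odd_iff.2 (by omega), Nat.even_iff.2 (by omega),
          Nat.even_iff.2 (by omega), Nat.even_iff.2 (by omega), by omega⟩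
      | exact ⟨d, a, b, c, Nat.odd_iff.2 (by omega), Nat.even_iff.2 (by omega),
          Nat.even_iff.2 (by omega), Nat.even_iff.2 (by omega), by omega⟩)
  · rintro ⟨a, b, c, d, ⟨k, hk⟩, ⟨l, hl⟩, ⟨m, hm⟩, ⟨p, hp⟩, h⟩
    have ea : a ^ 2 = 4 * (k ^ 2 + k) + 1 := by subst hk; ring
    have eb : b ^ 2 = 4 * l ^ 2 := by subst hl; ring
    have ec : c ^ 2 = 4 * m ^ 2 := by subst hm; ring
    have ed : d ^ 2 = 4 * p ^ 2 := by subst hp; ring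
    exact ⟨k ^ 2 + k + l ^ 2 + m ^ 2 + p ^ 2, by omega⟩
end
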